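/- arXiv:2301.09309 — 2 statements merged into one kernel-verified Lean document; each statement's English description precedes it below -/
import Mathlib

section
/- Let K be a field of characteristic ≠ 2, d a non-square in K, and let W be the Weierstrass curve y² = x³ + a'x² + b'x birationally equivalent to the Edwards curve E: x̂² + ŷ² = 1 + d x̂² ŷ² via β(x,y) = (y₁x/(x₁y), (x−x₁)/(x+x₁)) for a fixed point (x₁,y₁) on W with y₁ ≠ 0. Then for any point (x,y) on W with y ≠ 0 and x ≠ −x₁, the image β(x,y) lies on E. -/
theorem beta_maps_W_to_E {K : Type*} [Field K] (h2 : (2 : K) ≠ 0)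
    (d : K) (hns : ¬ IsSquare d)
    (x₁ y₁ a' b' : K) (hx₁ : x₁ ≠ 0)
    (ha' : a' = 2 * x₁ * (1 + d) / (1 - d)) (hb' : b' = x₁^2)
    (hW₁ : y₁^2 = x₁^3 + a' * x₁^2 + b' * x₁) (hy₁ : y₁ ≠ 0)
    (x y : K) (hW : y^2 = x^3 + a' * x^2 + b' * x)
    (hy : y ≠ 0) (hx : x ≠ -x₁) :
    (y₁ * x / (x₁ * y))^2 + ((x - x₁) / (x + x₁))^2 =
      1 + d * (y₁ * x / (x₁ * y))^2 * ((x - x₁) / (x + x₁))^2 := by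
  have hd1 : (1 : K) - d ≠ 0 := by
    intro h
    exact hns ⟨1, by linear_combination -h⟩
  have ha2 : a' * (1 - d) = 2 * x₁ * (1 + d) := by
    field_simp at ha'; exact ha'
  have hxx : x + x₁ ≠ 0 := fun h => hx (by linear_combination h)
  subst hb'
  field_simp
  linear_combination (x^2*(x+x₁)^2 - d*x^2*(x-x₁)^2) * hW₁ +
    (x₁^2*(x-x₁)^2 - x₁^2*(x+x₁)^2) * hW + x₁^2*x^2*(x-x₁)^2 * ha2
end

section
/- Let K be a field of characteristic ≠ 2, d a non-square in K, x₁ ≠ 0, a' = 2x₁(1+d)/(1−d), b' = x₁², and (x₁,y₁) on W: y² = x³ + a'x² + b'x with y₁ ≠ 0. Then the maps α(x̂,ŷ) = (x₁(1+ŷ)/(1−ŷ), y₁(1+ŷ)/(x̂(1−ŷ))) and β(x,y) = (y₁x/(x₁y), (x−x₁)/(x+x₁)) are mutually inverse on the open sets where they are defined: β(α(x̂,ŷ)) = (x̂,ŷ) whenever x̂ ≠ 0 and ŷ ∉ {1,−1}. -/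
theorem beta_alpha_inverse {K : Type*} [Field K] (h2 : (2 : K) ≠ 0)
    (d : K) (hns : ¬ IsSquare d)
    (x₁ y₁ a' b' : K) (hx₁ : x₁ ≠ 0)
    (ha' : a' = 2 * x₁ * (1 + d) / (1 - d)) (hb' : b' = x₁^2)
    (hW₁ : y₁^2 = x₁^3 + a' * x₁^2 + b' * x₁) (hy₁ : y₁ ≠ 0)
    (x' y' : K) (hE : x'^2 + y'^2 = 1 + d * x'^2 * y'^2)
    (hx' : x' ≠ 0) (hy'1 : y' ≠ 1) (hy'2 : y' ≠ -1) :
    let x := x₁ * (1 + y') / (1 - y')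
    let y := y₁ * (1 + y') / (x' * (1 - y'))
    y₁ * x / (x₁ * y) = x' ∧ (x - x₁) / (x + x₁) = y' := by
  have hm : (1 : K) - y' ≠ 0 := sub_ne_zero.mpr fun h => hy'1 h.symm
  have hp : (1 : K) + y' ≠ 0 := fun h => hy'2 (by linear_combination h)
  intro x y
  have hy : y ≠ 0 := by
    simp only [y]
    exact div_ne_zero (mul_ne_zero hy₁ hp) (mul_ne_zero hx' hm)
  constructor
  · simp only [x, y]
    field_simp
  · simp only [x]
    rw [div_eq_iff]
    · field_simp
      ring
    · intro h
      apply hx₁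
      have : x₁ * (1 + y') + x₁ * (1 - y') = 0 := by
        field_simp at h ⊢
        linear_combination h
      have h2' : x₁ * 2 = 0 := by linear_combination this
      rcases mul_eq_zero.mp h2' with h | h
      · exact h
      · exact absurd h h2
end
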